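/- All even moments of a skew normal random variable coincide with those of the standard normal: if X has density f_α, then for every n ≥ 1, E[X^{2n}] = (2n)!/(2^n n!), independently of α. -/

import Mathlib

open MeasureTheory Real Filter

/-- Standard normal density. -/
noncomputable def phi (x : ℝ) : ℝ := (Real.sqrt (2 * π))⁻¹ * Real.exp (-x ^ 2 / 2)

/-- Standard normal CDF. -/
noncomputable def Phi (x : ℝ) : ℝ := ∫ t in Set.Iic x, phi t

/-- Skew normal density with parameter α. -/
noncomputable def skewPdf (α x : ℝ) : ℝ := 2 * phi x * Phi (α * x)


lemma phi_nonneg (x : ℝ) : 0 ≤ phi x := by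
  unfold phi; positivity

lemma phi_even (x : ℝ) : phi (-x) = phi x := by
  unfold phi; rw [neg_pow]; norm_num

lemma integrable_pow_mul_phi (k : ℕ) : Integrable (fun x : ℝ => x ^ k * phi x) := by
  unfold phi
  have h := (integrable_rpow_mul_exp_neg_mul_sq (b := 1/2) (by norm_num)
    (s := (k : ℝ)) (lt_of_lt_of_le neg_one_lt_zero (Nat.cast_nonneg k))).const_mul
      (Real.sqrt (2 * π))⁻¹
  refine h.congr (Filter.Eventually.of_forall fun x => ?_)
  simp only [Real.rpow_natCast]
  ring_nf

lemma integrable_phi : Integrable phi := by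
  simpa using integrable_pow_mul_phi 0

lemma integral_phi : ∫ x : ℝ, phi x = 1 := by
  unfold phi
  rw [integral_const_mul]
  have : ∀ x : ℝ, Real.exp (-x ^ 2 / 2) = Real.exp (-(1/2 : ℝ) * x ^ 2) := by
    intro x; ring_nf
  simp_rw [this]
  rw [integral_gaussian]
  rw [show π / (1/2 : ℝ) = 2 * π by ring]
  rw [inv_mul_cancel₀ (by positivity : Real.sqrt (2*π) ≠ 0)]

lemma Phi_nonneg (x : ℝ) : 0 ≤ Phi x :=
  setIntegral_nonneg measurableSet_Iic (fun t _ => phi_nonneg t)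

lemma Phi_add_Phi_neg (y : ℝ) : Phi y + Phi (-y) = 1 := by
  have h1 : Phi (-y) = ∫ x in Set.Ioi y, phi x := by
    unfold Phi
    rw [← integral_comp_neg_Ioi]
    exact setIntegral_congr_fun measurableSet_Ioi (fun x _ => phi_even x)
  rw [h1]
  unfold Phi
  rw [← setIntegral_union (Set.Iic_disjoint_Ioi le_rfl) measurableSet_Ioi
    integrable_phi.integrableOn integrable_phi.integrableOn,
    Set.Iic_union_Ioi, setIntegral_univ, integral_phi]

lemma Phi_le_one (x : ℝ) : Phi x ≤ 1 := by
  have := Phi_add_Phi_neg x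
  have h2 := Phi_nonneg (-x)
  linarith

lemma measurable_Phi : Measurable Phi := by
  have : Monotone Phi := fun a b hab =>
    setIntegral_mono_set integrable_phi.integrableOn
      (Filter.Eventually.of_forall phi_nonneg)
      (HasSubset.Subset.eventuallyLE (Set.Iic_subset_Iic.mpr hab))
  exact this.measurable

lemma integrable_pow_mul_phi_mul_Phi (k : ℕ) (β : ℝ) :
    Integrable (fun x : ℝ => x ^ (2 * k) * (2 * phi x * Phi (β * x))) := by
  have hmeas : AEStronglyMeasurable (fun x : ℝ => x ^ (2 * k) * (2 * phi x * Phi (β * x)))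
      volume := by
    apply Measurable.aestronglyMeasurable
    apply Measurable.mul (by fun_prop)
    apply Measurable.mul (by unfold phi; fun_prop)
    exact measurable_Phi.comp (by fun_prop)
  refine Integrable.mono' ((integrable_pow_mul_phi (2 * k)).const_mul 2) hmeas
    (Filter.Eventually.of_forall fun x => ?_)
  have hx : (0:ℝ) ≤ x ^ (2 * k) := Even.pow_nonneg ⟨k, two_mul k⟩ x
  have hp := phi_nonneg x
  have h2 := Phi_nonneg (β * x)
  have h3 := Phi_le_one (β * x)
  rw [Real.norm_eq_abs,
    abs_of_nonneg (mul_nonneg hx (mul_nonneg (by linarith) h2)),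
    show x ^ (2 * k) * (2 * phi x * Phi (β * x)) = 2 * (x ^ (2*k) * phi x) * Phi (β * x)
      from by ring]
  exact mul_le_of_le_one_right (mul_nonneg two_pos.le (mul_nonneg hx hp)) h3

lemma skew_integral_eq (α : ℝ) (k : ℕ) :
    ∫ x : ℝ, x ^ (2 * k) * skewPdf α x = ∫ x : ℝ, x ^ (2 * k) * phi x := by
  have hint1 := integrable_pow_mul_phi_mul_Phi k α
  have hint2 := integrable_pow_mul_phi_mul_Phi k (-α)
  have hflip : ∫ x : ℝ, x ^ (2 * k) * (2 * phi x * Phi (α * x))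
      = ∫ x : ℝ, x ^ (2 * k) * (2 * phi x * Phi (-α * x)) := by
    conv_lhs => rw [← integral_neg_eq_self
      (fun x : ℝ => x ^ (2 * k) * (2 * phi x * Phi (α * x)))]
    refine integral_congr_ae (Filter.Eventually.of_forall fun x => ?_)
    simp only
    rw [phi_even, Even.neg_pow ⟨k, two_mul k⟩, show α * -x = -α * x by ring]
  have hsum : ∫ x : ℝ, (x ^ (2 * k) * (2 * phi x * Phi (α * x))
        + x ^ (2 * k) * (2 * phi x * Phi (-α * x)))
      = 2 * ∫ x : ℝ, x ^ (2 * k) * phi x := by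
    rw [← integral_const_mul]
    refine integral_congr_ae (Filter.Eventually.of_forall fun x => ?_)
    have h := Phi_add_Phi_neg (α * x)
    simp only [show -α * x = -(α * x) by ring]
    linear_combination x ^ (2 * k) * (2 * phi x) * h
  rw [integral_add hint1 hint2, ← hflip] at hsum
  simp only [skewPdf, ← mul_assoc] at *
  linarith

lemma Gamma_nat_add_half (n : ℕ) :
    Real.Gamma ((n : ℝ) + 1/2) = Real.sqrt π * (Nat.factorial (2 * n))
      / (4 ^ n * Nat.factorial n) := by
  induction n with
  | zero =>
      rw [show ((0:ℕ):ℝ) + 1/2 = 1/2 by norm_num, Real.Gamma_one_half_eq]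
      norm_num
  | succ m ih =>
      have hne : ((m : ℝ) + 1/2) ≠ 0 := by positivity
      have h1 : ((m + 1 : ℕ) : ℝ) + 1/2 = ((m : ℝ) + 1/2) + 1 := by push_cast; ring
      rw [h1, Real.Gamma_add_one hne, ih]
      have h2 : Nat.factorial (2 * (m + 1)) = (2*m+2) * ((2*m+1) * Nat.factorial (2*m)) := by
        rw [show 2 * (m+1) = (2*m+1) + 1 by ring, Nat.factorial_succ,
          show 2*m+1+1 = 2*m+2 by ring, Nat.factorial_succ]
      have h3 : Nat.factorial (m + 1) = (m+1) * Nat.factorial m := Nat.factorial_succ m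
      have hfm : (Nat.factorial m : ℝ) ≠ 0 := Nat.cast_ne_zero.mpr (Nat.factorial_ne_zero m)
      rw [h2, h3]
      push_cast
      field_simp
      ring

lemma gaussian_moment (n : ℕ) :
    ∫ x : ℝ, x ^ (2 * n) * phi x
      = (Nat.factorial (2 * n) : ℝ) / (2 ^ n * Nat.factorial n) := by
  have habs : ∀ x : ℝ, x ^ (2 * n) * phi x
      = (fun y : ℝ => y ^ (2 * n) * phi y) |x| := by
    intro x
    simp only
    rw [show |x| ^ (2 * n) = x ^ (2 * n) by
      rw [pow_mul, pow_mul, sq_abs], show phi |x| = phi x by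
      unfold phi; rw [sq_abs]]
  have h2 : ∫ x : ℝ, x ^ (2 * n) * phi x
      = 2 * ∫ x in Set.Ioi (0:ℝ), x ^ (2 * n) * phi x := by
    calc ∫ x : ℝ, x ^ (2 * n) * phi x
        = ∫ x : ℝ, (fun y : ℝ => y ^ (2 * n) * phi y) |x| :=
          integral_congr_ae (Filter.Eventually.of_forall habs)
      _ = 2 * ∫ x in Set.Ioi (0:ℝ), x ^ (2 * n) * phi x :=
          integral_comp_abs (f := fun y : ℝ => y ^ (2 * n) * phi y)
  have h3 : ∫ x in Set.Ioi (0:ℝ), x ^ (2 * n) * phi x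
      = (Real.sqrt (2 * π))⁻¹ *
        ((1/2 : ℝ) ^ (-(((2 * n : ℕ) : ℝ) + 1) / 2) * (1 / 2)
          * Real.Gamma ((((2 * n : ℕ) : ℝ) + 1) / 2)) := by
    rw [← integral_rpow_mul_exp_neg_mul_rpow (p := 2) (q := ((2 * n : ℕ) : ℝ))
      (b := 1/2) two_pos (lt_of_lt_of_le neg_one_lt_zero (Nat.cast_nonneg _)) (by norm_num), ← integral_const_mul]
    refine setIntegral_congr_fun measurableSet_Ioi (fun x hx => ?_)
    unfold phi
    rw [Real.rpow_two, Real.rpow_natCast]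
    ring_nf
  rw [h2, h3]
  have e1 : (((2 * n : ℕ) : ℝ) + 1) / 2 = (n : ℝ) + 1/2 := by push_cast; ring
  have e2 : (1/2 : ℝ) ^ (-(((2 * n : ℕ) : ℝ) + 1) / 2) = 2 ^ (n : ℕ) * Real.sqrt 2 := by
    rw [show (-(((2 * n : ℕ) : ℝ) + 1) / 2) = -((n : ℝ) + 1/2) by push_cast; ring,
      one_div, Real.inv_rpow two_pos.le, Real.rpow_neg two_pos.le, inv_inv,
      Real.rpow_add two_pos, Real.rpow_natCast, Real.sqrt_eq_rpow]
    norm_num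
  rw [e1, e2, _root_.Gamma_nat_add_half]
  have hs2 : Real.sqrt (2 * π) = Real.sqrt 2 * Real.sqrt π :=
    Real.sqrt_mul two_pos.le π
  have h2p : (0:ℝ) < Real.sqrt 2 := Real.sqrt_pos.mpr two_pos
  have hpp : (0:ℝ) < Real.sqrt π := Real.sqrt_pos.mpr pi_pos
  have hfn : (Nat.factorial n : ℝ) ≠ 0 := Nat.cast_ne_zero.mpr (Nat.factorial_ne_zero n)
  rw [hs2]
  have h4 : (4 : ℝ) ^ n = 2 ^ n * 2 ^ n := by
    rw [← mul_pow]; norm_num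
  rw [h4]
  field_simp


/-- Even moments of the skew normal law coincide with those of the standard normal. -/
theorem skewNormal_even_moments (α : ℝ) (n : ℕ) (hn : 1 ≤ n) :
    (∫ x : ℝ, x ^ (2 * n) * skewPdf α x)
      = (Nat.factorial (2 * n) : ℝ) / (2 ^ n * Nat.factorial n) := by
  rw [skew_integral_eq α n, gaussian_moment n]
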